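/- arXiv:2101.06527 — 2 statements merged into one kernel-verified Lean document; each statement's English description precedes it below -/
import Mathlib

section
/- Let A be a multiring and a ∈ A. Then S_a equals the intersection of the complements A∖p over all prime ideals p with a ∉ p. In particular, the intersection of the complements of all prime ideals of A equals the set of weak-invertible elements of A. -/
universe u v

/-- A multiring: a commutative monoid with a multivalued addition. -/
class Multiring (A : Type u) extends CommMonoid A, Zero A, Neg A where
  /-- the multivalued sum: `madd b c` is the set `b + c` -/
  madd : A → A → Set A
  madd_nonempty : ∀ a b : A, (madd a b).Nonempty
  madd_rev_left : ∀ a b c : A, a ∈ madd b c → c ∈ madd (-b) a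
  madd_rev_right : ∀ a b c : A, a ∈ madd b c → b ∈ madd a (-c)
  mem_madd_zero : ∀ a b : A, a ∈ madd b 0 ↔ a = b
  madd_assoc : ∀ a b c g x : A, g ∈ madd a b → x ∈ madd g c →
    ∃ h ∈ madd b c, x ∈ madd a h
  madd_comm : ∀ a b : A, madd a b = madd b a
  mul_zero' : ∀ a : A, a * 0 = 0
  madd_mul : ∀ a b c d : A, a ∈ madd b c → a * d ∈ madd (b * d) (c * d)

namespace Multiring

variable {A : Type u} [Multiring A]

/-- the iterated multivalued sum `x₁ + ⋯ + xₙ = {x₁} + (x₂ + ⋯ + xₙ)` of a list -/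
def listSum : List A → Set A
  | [] => {(0 : A)}
  | a :: l => {x : A | ∃ y ∈ listSum l, x ∈ madd a y}

/-- an ideal of a multiring: a nonempty subset with `I + I ⊆ I` and `A·I ⊆ I` -/
def IsIdeal (I : Set A) : Prop :=
  I.Nonempty ∧ (∀ a ∈ I, ∀ b ∈ I, madd a b ⊆ I) ∧ ∀ a : A, ∀ b ∈ I, a * b ∈ I

/-- a prime ideal: a proper ideal such that `a*b ∈ p → a ∈ p ∨ b ∈ p` -/
def IsPrimeIdeal (I : Set A) : Prop :=
  IsIdeal I ∧ (1 : A) ∉ I ∧ ∀ a b : A, a * b ∈ I → a ∈ I ∨ b ∈ I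

/-- a maximal ideal: a proper ideal maximal among proper ideals -/
def IsMaximalIdeal (I : Set A) : Prop :=
  IsIdeal I ∧ (1 : A) ∉ I ∧ ∀ J : Set A, IsIdeal J → (1 : A) ∉ J → I ⊆ J → J = I

/-- a multiplicative subset -/
def IsMultiplicative (S : Set A) : Prop :=
  (1 : A) ∈ S ∧ ∀ s ∈ S, ∀ t ∈ S, s * t ∈ S

/-- a hyperring: a multiring with the strong distributivity property -/
def IsHyperring (A : Type u) [Multiring A] : Prop :=
  ∀ x b c d : A, x ∈ madd (b * d) (c * d) → ∃ a ∈ madd b c, x = a * d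

/-- a von Neumann (regular) hyperring -/
def IsVonNeumann (A : Type u) [Multiring A] : Prop :=
  IsHyperring A ∧ ∀ a : A, ∃ b : A, a = a * a * b

/-- the equivalence modulo an ideal `I`: `a ∼_I b` iff `(a + (-b)) ∩ I ≠ ∅`;
this is equality of classes in the quotient multiring `A/I`. -/
def simI (I : Set A) (a b : A) : Prop := ∃ x ∈ madd a (-b), x ∈ I

/-- membership of classes in the multivalued sum of the quotient `A/I`:
`[a] ∈ [b] + [c]` iff `a ∈ b + c + i` for some `i ∈ I`. -/
def qmemI (I : Set A) (a b c : A) : Prop := ∃ i ∈ I, ∃ w ∈ madd c i, a ∈ madd b w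

/-- representatives `x` with `[x] ∈ [c₁] + ⋯ + [cₙ]` in the quotient `A/I` -/
def qlistSumI (I : Set A) : List A → Set A
  | [] => {x : A | simI I x 0}
  | c :: l => {x : A | ∃ y ∈ qlistSumI I l, qmemI I x c y}

/-- the quotient multiring `A/I` is a multifield: `1 ≠ 0` and every nonzero
element is weak-invertible -/
def QuotIsMultifield (I : Set A) : Prop :=
  ¬ simI I 1 0 ∧
    ∀ a : A, ¬ simI I a 0 →
      ∃ l : List A, l ≠ [] ∧ (1 : A) ∈ qlistSumI I (l.map fun b => a * b)

/-- the quotient multiring `A/I` is a hyperfield: `1 ≠ 0` and every nonzero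
element is invertible -/
def QuotIsHyperfield (I : Set A) : Prop :=
  ¬ simI I 1 0 ∧ ∀ a : A, ¬ simI I a 0 → ∃ b : A, simI I (a * b) 1

/-- the Marshall equivalence associated to a multiplicative set `S`:
`a ∼_S b` iff `as = bt` for some `s,t ∈ S`; this is equality of classes in the
Marshall quotient `A/ₘS`. -/
def simM (S : Set A) (a b : A) : Prop := ∃ s ∈ S, ∃ t ∈ S, a * s = b * t

/-- `S̄ = {x : xs ∈ S for some s ∈ S}` -/
def mbar (S : Set A) : Set A := {x : A | ∃ s ∈ S, x * s ∈ S}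

/-- membership of classes in the multivalued sum of the Marshall quotient `A/ₘS`:
`[a] ∈ [b] + [c]` iff `as ∈ bt + cu` for some `s,t,u ∈ S`. -/
def qmemM (S : Set A) (a b c : A) : Prop :=
  ∃ s ∈ S, ∃ t ∈ S, ∃ u ∈ S, a * s ∈ madd (b * t) (c * u)

/-- representatives `x` with `[x] ∈ [c₁] + ⋯ + [cₙ]` in the Marshall quotient `A/ₘS` -/
def qlistSumM (S : Set A) : List A → Set A
  | [] => {x : A | simM S x 0}
  | c :: l => {x : A | ∃ y ∈ qlistSumM S l, qmemM S x c y}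

/-- the multivalued sum of the hyperfield `3 = {-1, 0, 1}` -/
def signAdd : SignType → SignType → Set SignType
  | SignType.zero, x => {x}
  | x, SignType.zero => {x}
  | SignType.pos, SignType.pos => {SignType.pos}
  | SignType.neg, SignType.neg => {SignType.neg}
  | _, _ => Set.univ

/-- a multiring morphism `A → 3`, i.e. an order of `A` -/
def IsSignMorphism (σ : A → SignType) : Prop :=
  (∀ a b c : A, a ∈ madd b c → σ a ∈ signAdd (σ b) (σ c)) ∧
  (∀ a b : A, σ (a * b) = σ a * σ b) ∧
  (∀ a : A, σ (-a) = -(σ a)) ∧ σ 0 = 0 ∧ σ 1 = 1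

/-- a prime cone of a multiring -/
def IsPrimeCone (P : Set A) : Prop :=
  (∀ a : A, a * a ∈ P) ∧ (∀ a ∈ P, ∀ b ∈ P, madd a b ⊆ P) ∧
  (∀ a ∈ P, ∀ b ∈ P, a * b ∈ P) ∧ (∀ a : A, a ∈ P ∨ -a ∈ P) ∧
  IsPrimeIdeal {x : A | x ∈ P ∧ -x ∈ P}

open Classical in
/-- the map `σ_P : A → 3` associated to a prime cone `P` -/
noncomputable def sigmaOf (P : Set A) (a : A) : SignType :=
  if a ∈ P ∧ -a ∈ P then 0 else if a ∈ P then 1 else -1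

/-- `ΣA²`: the set of elements lying in some finite sum of squares -/
def SumsOfSquares (A : Type u) [Multiring A] : Set A :=
  {x : A | ∃ l : List A, l ≠ [] ∧ x ∈ listSum (l.map fun a => a * a)}

/-- a multiring is semi-real when `-1 ∉ ΣA²` -/
def IsSemiReal (A : Type u) [Multiring A] : Prop := (-(1 : A)) ∉ SumsOfSquares A

/-- a real reduced multiring -/
def IsRealReduced (A : Type u) [Multiring A] : Prop :=
  IsSemiReal A ∧ (∀ a : A, a * a * a = a) ∧
  (∀ a b : A, madd a (a * b * b) = {a}) ∧
  (∀ a b : A, ∃ c : A, madd (a * a) (b * b) = {c})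

/-- a hyperfield: a hyperring with `1 ≠ 0` and all nonzero elements invertible -/
def IsHyperfield (A : Type u) [Multiring A] : Prop :=
  IsHyperring A ∧ (1 : A) ≠ 0 ∧ ∀ a : A, a ≠ 0 → ∃ b : A, a * b = 1

/-- a morphism of multirings -/
def IsMorphism {B : Type v} [Multiring B] (f : A → B) : Prop :=
  (∀ a b c : A, a ∈ madd b c → f a ∈ madd (f b) (f c)) ∧
  (∀ a b : A, f (a * b) = f a * f b) ∧
  (∀ a : A, f (-a) = -(f a)) ∧ f 0 = 0 ∧ f 1 = 1

/-- the radical `√α = {x : xⁿ ∈ α for some n ≥ 1}` of an ideal -/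
def radical (α : Set A) : Set A := {x : A | ∃ n : ℕ, 1 ≤ n ∧ x ^ n ∈ α}

/-- the ideal `(x) = ∪ {t₁x + ⋯ + tₙx}` generated by `x` -/
def genIdeal (x : A) : Set A :=
  {y : A | ∃ l : List A, l ≠ [] ∧ y ∈ listSum (l.map fun t => t * x)}

/-- `S_a = {x : aⁿ ∈ (x) for some n ≥ 0}` -/
def Sgen (a : A) : Set A := {x : A | ∃ n : ℕ, a ^ n ∈ genIdeal x}

/-- `a` is weak-invertible when `1 ∈ ab₁ + ⋯ + abₙ` for some `b₁,…,bₙ` -/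
def WeakInvertible (a : A) : Prop :=
  ∃ l : List A, l ≠ [] ∧ (1 : A) ∈ listSum (l.map fun b => a * b)

/-- the prime spectrum of a multiring -/
abbrev Spec (A : Type u) [Multiring A] : Type u := {p : Set A // IsPrimeIdeal p}

/-- the spectral topology on `spec A`, generated by the sets `D(a) = {p : a ∉ p}` -/
instance : TopologicalSpace (Spec A) :=
  TopologicalSpace.generateFrom {U : Set (Spec A) | ∃ a : A, U = {p : Spec A | a ∉ p.1}}

/-- the Marshall quotient `A/ₘS` is a real reduced multiring (expressed on
representatives) -/
def QuotIsRealReduced (S : Set A) : Prop :=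
  (∀ l : List A, l ≠ [] → (-(1 : A)) ∉ qlistSumM S (l.map fun a => a * a)) ∧
  (∀ a : A, simM S (a * a * a) a) ∧
  (∀ a b x : A, qmemM S x a (a * b * b) ↔ simM S x a) ∧
  (∀ a b : A, ∃ c : A, ∀ x : A, qmemM S x (a * a) (b * b) ↔ simM S x c)

/-- the Marshall quotient `A/ₘS` is a geometric von Neumann hyperring
(expressed on representatives): it is a hyperring, von Neumann regular, and
`e + eᶜ = {1}` for every idempotent `e` -/
def QuotGeometricVN (S : Set A) : Prop :=
  (∀ x b c d : A, qmemM S x (b * d) (c * d) → ∃ a : A, qmemM S a b c ∧ simM S x (a * d)) ∧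
  (∀ a : A, ∃ b : A, simM S a (a * a * b)) ∧
  (∀ e x : A, simM S (e * e) e → qmemM S x 1 (-e) → simM S (e * x) 0 →
    ∀ y : A, qmemM S y e x ↔ simM S y 1)

/-- a von Neumann subgroup: a multiplicative set such that for every idempotent
`a` (with complement `aᶜ`) and every `x ∈ D_S(a, aᶜ)` there is `s ∈ S` with `xs ∈ S` -/
def IsVNSubgroup (S : Set A) : Prop :=
  IsMultiplicative S ∧
    ∀ a x ac : A, a * a = a → ac ∈ madd 1 (-a) → a * ac = 0 →
      (∃ u ∈ S, ∃ v ∈ S, ∃ w ∈ S, x * u ∈ madd (a * v) (ac * w)) →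
      ∃ s ∈ S, x * s ∈ S

/-- a preorder of a multiring -/
def IsPreorderSet (T : Set A) : Prop :=
  (∀ a : A, a * a ∈ T) ∧ (∀ a ∈ T, ∀ b ∈ T, a * b ∈ T) ∧ (∀ a ∈ T, ∀ b ∈ T, madd a b ⊆ T)

/-- `1 + T = ∪ {1 + t : t ∈ T}` -/
def oneAdd (T : Set A) : Set A := {x : A | ∃ t ∈ T, x ∈ madd 1 t}

/-- `ΣḞ²`: elements lying in some finite sum of squares of nonzero elements -/
def sumSqNonzero (A : Type u) [Multiring A] : Set A :=
  {x : A | ∃ l : List A, l ≠ [] ∧ (∀ a ∈ l, a ≠ 0) ∧ x ∈ listSum (l.map fun a => a * a)}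

end Multiring

/-!
An element `x` lies in `S_a` exactly when the ideal `(x)` meets the multiplicative set `{aⁿ}`.
If it does not, Zorn's lemma gives an ideal `m ⊇ (x)` maximal among those avoiding `{aⁿ}`, and
`m` is prime as for commutative rings: for `b, c ∉ m`, maximality puts some `aᵐ` in `m + (b)`
and some `aᵏ` in `m + (c)`, and multiplying out shows `aᵐ⁺ᵏ ∈ m` whenever `bc ∈ m`.
The case `a = 1` gives the second statement, since `1 ∈ (x)` is weak invertibility of `x`.
-/

namespace Multiring

variable {A : Type u} [Multiring A]

theorem mem_zero_madd {a b : A} : a ∈ madd 0 b ↔ a = b := by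
  rw [madd_comm]; exact mem_madd_zero a b

theorem self_mem_madd_zero (a : A) : a ∈ madd a 0 := (mem_madd_zero a a).mpr rfl

theorem zero_mul' (a : A) : (0 : A) * a = 0 := by rw [mul_comm]; exact mul_zero' a

theorem madd_assoc' {a b c h x : A} (hh : h ∈ madd b c) (hx : x ∈ madd a h) :
    ∃ g ∈ madd a b, x ∈ madd g c := by
  rw [madd_comm] at hh hx
  obtain ⟨g, hg, hxg⟩ := madd_assoc c b a h x hh hx
  rw [madd_comm] at hg hxg
  exact ⟨g, hg, hxg⟩

theorem madd_madd_madd_comm {a b c d y z w : A} (hy : y ∈ madd a b) (hz : z ∈ madd c d)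
    (hw : w ∈ madd y z) : ∃ u ∈ madd a c, ∃ v ∈ madd b d, w ∈ madd u v := by
  obtain ⟨g, hg, hwg⟩ := madd_assoc' hz hw
  obtain ⟨h, hh, hgh⟩ := madd_assoc a b c y g hy hg
  rw [madd_comm] at hh
  obtain ⟨u, hu, hgu⟩ := madd_assoc' hh hgh
  obtain ⟨v, hv, hwv⟩ := madd_assoc u b d g w hgu hwg
  exact ⟨u, hu, v, hv, hwv⟩

theorem mul_mem_listSum_map_mul (d : A) :
    ∀ {l : List A} {y : A}, y ∈ listSum l → y * d ∈ listSum (l.map (· * d))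
  | [], y, hy => by
      simp only [listSum, Set.mem_singleton_iff, List.map_nil] at hy ⊢
      rw [hy, zero_mul']
  | c :: l, y, ⟨w, hw, hyw⟩ => ⟨w * d, mul_mem_listSum_map_mul d hw, madd_mul y c w d hyw⟩

theorem madd_subset_listSum_append :
    ∀ {l₁ l₂ : List A} {y₁ y₂ : A}, y₁ ∈ listSum l₁ → y₂ ∈ listSum l₂ →
      madd y₁ y₂ ⊆ listSum (l₁ ++ l₂)
  | [], l₂, y₁, y₂, h₁, h₂, z, hz => by
      rw [listSum, Set.mem_singleton_iff] at h₁
      subst h₁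
      rwa [mem_zero_madd.mp hz]
  | c :: l₁, l₂, y₁, y₂, ⟨w, hw, hyw⟩, h₂, z, hz => by
      obtain ⟨h, hh, hzh⟩ := madd_assoc c w y₂ y₁ z hyw hz
      exact ⟨h, madd_subset_listSum_append hw h₂ hh, hzh⟩

namespace IsIdeal

variable {I : Set A}

theorem zero_mem (hI : IsIdeal I) : (0 : A) ∈ I := by
  obtain ⟨⟨b, hb⟩, -, hmul⟩ := hI
  simpa only [zero_mul'] using hmul 0 b hb

theorem listSum_subset (hI : IsIdeal I) :
    ∀ {l : List A}, (∀ c ∈ l, c ∈ I) → listSum l ⊆ I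
  | [], _, z, hz => by
      rw [listSum, Set.mem_singleton_iff] at hz
      exact hz ▸ hI.zero_mem
  | c :: _, h, _, ⟨y, hy, hzy⟩ =>
      hI.2.1 c (h c List.mem_cons_self) y
        (hI.listSum_subset (fun d hd => h d (List.mem_cons_of_mem c hd)) hy) hzy

theorem genIdeal_subset (hI : IsIdeal I) {x : A} (hx : x ∈ I) : genIdeal x ⊆ I := by
  rintro y ⟨l, -, hy⟩
  refine hI.listSum_subset (fun c hc => ?_) hy
  obtain ⟨t, -, rfl⟩ := List.mem_map.mp hc
  exact hI.2.2 t x hx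

end IsIdeal

theorem mem_genIdeal_self (x : A) : x ∈ genIdeal x :=
  ⟨[1], by simp, 0, rfl, by simpa using self_mem_madd_zero x⟩

theorem zero_mem_genIdeal (x : A) : (0 : A) ∈ genIdeal x :=
  ⟨[0], by simp, 0, rfl, by simpa [zero_mul'] using self_mem_madd_zero (0 : A)⟩

theorem mul_mem_genIdeal_mul {b y : A} (hy : y ∈ genIdeal b) (d : A) :
    y * d ∈ genIdeal (b * d) := by
  obtain ⟨l, hl, hy⟩ := hy
  refine ⟨l, hl, ?_⟩
  simpa only [List.map_map, Function.comp_def, mul_assoc] using mul_mem_listSum_map_mul d hy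

theorem mul_mem_genIdeal {b y : A} (d : A) (hy : y ∈ genIdeal b) : d * y ∈ genIdeal b := by
  obtain ⟨l, hl, hy⟩ := hy
  refine ⟨l.map (· * d), by simpa using hl, ?_⟩
  simpa only [List.map_map, Function.comp_def, mul_right_comm _ d, mul_comm d]
    using mul_mem_listSum_map_mul d hy

theorem isIdeal_genIdeal (x : A) : IsIdeal (genIdeal x) := by
  refine ⟨⟨x, mem_genIdeal_self x⟩, ?_, fun d _ hy => mul_mem_genIdeal d hy⟩
  rintro y₁ ⟨l₁, hl₁, h₁⟩ y₂ ⟨l₂, -, h₂⟩ z hz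
  refine ⟨l₁ ++ l₂, by simp [hl₁], ?_⟩
  rw [List.map_append]
  exact madd_subset_listSum_append h₁ h₂ hz

theorem IsIdeal.mul_mem_of_mem_genIdeal {I : Set A} (hI : IsIdeal I) {b c y z : A}
    (hbc : b * c ∈ I) (hy : y ∈ genIdeal b) (hz : z ∈ genIdeal c) : y * z ∈ I := by
  have hzb : z * b ∈ I := hI.genIdeal_subset (by rwa [mul_comm c b]) (mul_mem_genIdeal_mul hz b)
  exact hI.genIdeal_subset (by rwa [mul_comm]) (mul_mem_genIdeal_mul hy z)

/-- The ideal `I + (b)`. -/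
def supGenIdeal (I : Set A) (b : A) : Set A :=
  {z : A | ∃ i ∈ I, ∃ y ∈ genIdeal b, z ∈ madd i y}

theorem subset_supGenIdeal (I : Set A) (b : A) : I ⊆ supGenIdeal I b :=
  fun i hi => ⟨i, hi, 0, zero_mem_genIdeal b, self_mem_madd_zero i⟩

theorem IsIdeal.mem_supGenIdeal_self {I : Set A} (hI : IsIdeal I) (b : A) :
    b ∈ supGenIdeal I b :=
  ⟨0, hI.zero_mem, b, mem_genIdeal_self b, mem_zero_madd.mpr rfl⟩

theorem isIdeal_supGenIdeal {I : Set A} (hI : IsIdeal I) (b : A) :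
    IsIdeal (supGenIdeal I b) := by
  refine ⟨⟨0, subset_supGenIdeal I b hI.zero_mem⟩, ?_, ?_⟩
  · rintro z₁ ⟨i₁, hi₁, y₁, hy₁, hz₁⟩ z₂ ⟨i₂, hi₂, y₂, hy₂, hz₂⟩ w hw
    obtain ⟨u, hu, v, hv, hwv⟩ := madd_madd_madd_comm hz₁ hz₂ hw
    exact ⟨u, hI.2.1 i₁ hi₁ i₂ hi₂ hu, v, (isIdeal_genIdeal b).2.1 y₁ hy₁ y₂ hy₂ hv, hwv⟩
  · rintro d z ⟨i, hi, y, hy, hz⟩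
    refine ⟨d * i, hI.2.2 d i hi, d * y, mul_mem_genIdeal d hy, ?_⟩
    simpa only [mul_comm _ d] using madd_mul z i y d hz

/-- Multiplying `aᵐ = i + y` and `aᵏ = i' + y'` (with `i, i' ∈ I`, `y ∈ (b)`, `y' ∈ (c)`)
leaves only terms of `I`, the cross term `y y'` because `bc ∈ I`. -/
theorem IsIdeal.pow_add_mem_of_mul_mem {I : Set A} (hI : IsIdeal I) {a b c : A} {m k : ℕ}
    (hb : a ^ m ∈ supGenIdeal I b) (hc : a ^ k ∈ supGenIdeal I c) (hbc : b * c ∈ I) :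
    a ^ (m + k) ∈ I := by
  obtain ⟨i, hi, y, hy, hm⟩ := hb
  obtain ⟨i', hi', y', hy', hk⟩ := hc
  have hsplit : a ^ (m + k) ∈ madd (i * a ^ k) (y * a ^ k) := by
    rw [pow_add]; exact madd_mul _ _ _ _ hm
  have hya : y * a ^ k ∈ madd (i' * y) (y' * y) := by
    rw [mul_comm y]; exact madd_mul _ _ _ _ hk
  have hyy' : y' * y ∈ I := by
    rw [mul_comm]; exact hI.mul_mem_of_mem_genIdeal hbc hy hy'
  have hyaI : y * a ^ k ∈ I :=
    hI.2.1 _ (by rw [mul_comm]; exact hI.2.2 y i' hi') _ hyy' hya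
  exact hI.2.1 _ (by rw [mul_comm]; exact hI.2.2 _ i hi) _ hyaI hsplit

theorem IsPrimeIdeal.mem_of_pow_mem {p : Set A} (hp : IsPrimeIdeal p) {a : A} :
    ∀ {n : ℕ}, a ^ n ∈ p → a ∈ p
  | 0, h => absurd (pow_zero a ▸ h) hp.2.1
  | n + 1, h => by
      rw [pow_succ] at h
      exact (hp.2.2 _ _ h).elim hp.mem_of_pow_mem id

theorem isIdeal_sUnion_of_isChain {c : Set (Set A)} (hc : ∀ I ∈ c, IsIdeal I)
    (hchain : IsChain (· ⊆ ·) c) (hne : c.Nonempty) : IsIdeal (⋃₀ c) := by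
  obtain ⟨I₀, hI₀⟩ := hne
  obtain ⟨x, hx⟩ := (hc I₀ hI₀).1
  refine ⟨⟨x, I₀, hI₀, hx⟩, ?_, ?_⟩
  · rintro z₁ ⟨I₁, hI₁, hz₁⟩ z₂ ⟨I₂, hI₂, hz₂⟩ w hw
    rcases hchain.total hI₁ hI₂ with h | h
    · exact ⟨I₂, hI₂, (hc I₂ hI₂).2.1 z₁ (h hz₁) z₂ hz₂ hw⟩
    · exact ⟨I₁, hI₁, (hc I₁ hI₁).2.1 z₁ hz₁ z₂ (h hz₂) hw⟩
  · rintro d z ⟨I₁, hI₁, hz⟩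
    exact ⟨I₁, hI₁, (hc I₁ hI₁).2.2 d z hz⟩

theorem isPrimeIdeal_of_maximal_pow_not_mem {a : A} {m : Set A}
    (hm : Maximal (· ∈ {I : Set A | IsIdeal I ∧ ∀ n : ℕ, a ^ n ∉ I}) m) : IsPrimeIdeal m := by
  obtain ⟨⟨hmI : IsIdeal m, hma⟩, hmax⟩ := hm
  have hsup : ∀ b ∉ m, ∃ n : ℕ, a ^ n ∈ supGenIdeal m b := by
    intro b hb
    by_contra! hcon
    exact hb (hmax ⟨isIdeal_supGenIdeal hmI b, hcon⟩ (subset_supGenIdeal m b)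
      (hmI.mem_supGenIdeal_self b))
  refine ⟨hmI, fun h => hma 0 (by rwa [pow_zero]), fun b c hbc => ?_⟩
  by_contra! hcon
  obtain ⟨nb, hnb⟩ := hsup b hcon.1
  obtain ⟨nc, hnc⟩ := hsup c hcon.2
  exact hma (nb + nc) (hmI.pow_add_mem_of_mul_mem hnb hnc hbc)

theorem IsIdeal.exists_isPrimeIdeal_of_pow_not_mem {I : Set A} (hI : IsIdeal I) {a : A}
    (ha : ∀ n : ℕ, a ^ n ∉ I) : ∃ p : Set A, IsPrimeIdeal p ∧ I ⊆ p ∧ a ∉ p := by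
  obtain ⟨m, hIm, hm⟩ := zorn_subset_nonempty {J : Set A | IsIdeal J ∧ ∀ n : ℕ, a ^ n ∉ J}
    (fun c hcS hchain hne => ⟨⋃₀ c,
      ⟨isIdeal_sUnion_of_isChain (fun J hJ => (hcS hJ).1) hchain hne,
        fun n ⟨J, hJ, hn⟩ => (hcS hJ).2 n hn⟩,
      fun _ => Set.subset_sUnion_of_mem⟩) I ⟨hI, ha⟩
  exact ⟨m, isPrimeIdeal_of_maximal_pow_not_mem hm, hIm, fun h => hm.prop.2 1 (by rwa [pow_one])⟩

theorem mem_sgen_iff (a x : A) :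
    x ∈ Sgen a ↔ ∀ p : Set A, IsPrimeIdeal p → a ∉ p → x ∉ p := by
  refine ⟨fun ⟨n, hn⟩ p hp hap hxp => hap (hp.mem_of_pow_mem (hp.1.genIdeal_subset hxp hn)),
    fun h => ?_⟩
  by_contra! hx
  obtain ⟨p, hp, hxp, hap⟩ :=
    (isIdeal_genIdeal x).exists_isPrimeIdeal_of_pow_not_mem fun n hn => hx ⟨n, hn⟩
  exact h p hp hap (hxp (mem_genIdeal_self x))

theorem weakInvertible_iff_one_mem_genIdeal (x : A) :
    WeakInvertible x ↔ (1 : A) ∈ genIdeal x := by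
  simp only [WeakInvertible, genIdeal, Set.mem_ofPred_eq, mul_comm x]

theorem mem_sgen_one_iff (x : A) : x ∈ Sgen (1 : A) ↔ (1 : A) ∈ genIdeal x := by
  simp only [Sgen, Set.mem_ofPred_eq, one_pow, exists_const]

end Multiring

/-- `S_a` is the intersection of the complements of the prime ideals not
containing `a`; in particular the intersection of the complements of all prime
ideals is the set of weak-invertible elements. -/
theorem Sgen_eq_inter_compl_primes {A : Type u} [Multiring A] (a : A) :
    Multiring.Sgen a =
      {x : A | ∀ p : Set A, Multiring.IsPrimeIdeal p → a ∉ p → x ∉ p} ∧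
    {x : A | ∀ p : Set A, Multiring.IsPrimeIdeal p → x ∉ p} =
      {x : A | Multiring.WeakInvertible x} := by
  refine ⟨Set.ext fun x => Multiring.mem_sgen_iff a x, Set.ext fun x => ?_⟩
  have h := Multiring.mem_sgen_iff (1 : A) x
  rw [Multiring.mem_sgen_one_iff] at h
  rw [Set.mem_ofPred_eq, Set.mem_ofPred_eq, Multiring.weakInvertible_iff_one_mem_genIdeal, h]
  exact ⟨fun hx p hp _ => hx p hp, fun hx p hp => hx p hp hp.2.1⟩
end

section
/- Let A be a von Neumann hyperring and T ⊆ A a proper preorder. Then 1+T is a von Neumann subgroup of A. -/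
universe u v

/-!
For `s ∈ 1 + T` and `t ∈ T` one has `s + t ⊆ 1 + T` and `t s ∈ t + T t ⊆ T`; these two
facts make `S = 1 + T` multiplicative. Now let `e` be an idempotent and `z = xu ∈ ev + eᶜw`
with `u, v, w ∈ S`. Then `z ∈ T`, `ze = ev` and `zeᶜ = eᶜw`, so multiplying `1 ∈ e + eᶜ` by
`vw` gives `vw ∈ (ew)z + (eᶜv)z`, and strong distributivity writes `vw = pz` with
`p ∈ ew + eᶜv ⊆ T`. For `s ∈ 1 + p` we get `zs ∈ z + pz = vw + z ⊆ S`, hence `x(us) ∈ S`.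
-/

namespace Multiring

variable {A : Type u} [Multiring A]

theorem zero_mem_madd_neg_self (a : A) : (0 : A) ∈ madd (-a) a :=
  madd_rev_left a a 0 ((mem_madd_zero a a).mpr rfl)

theorem neg_mul_eq (a b : A) : -a * b = -(a * b) := by
  have h : (0 : A) ∈ madd (-a * b) (a * b) := by
    simpa only [zero_mul'] using madd_mul 0 (-a) a b (zero_mem_madd_neg_self a)
  have h' := madd_rev_right 0 (-a * b) (a * b) h
  rw [madd_comm] at h'
  exact (mem_madd_zero _ _).mp h'

theorem neg_neg_eq (a : A) : -(-a) = a :=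
  ((mem_madd_zero a (-(-a))).mp (madd_rev_left 0 (-a) a (zero_mem_madd_neg_self a))).symm

theorem neg_zero_eq : -(0 : A) = 0 :=
  ((mem_madd_zero (0 : A) (-0)).mp (madd_rev_left 0 0 0 ((mem_madd_zero 0 0).mpr rfl))).symm

theorem mul_eq_of_mem_madd_of_mul_eq_zero {z b c d : A} (hz : z ∈ madd b c) (hc : c * d = 0) :
    z * d = b * d := by
  have h := madd_mul z b c d hz
  rwa [hc, mem_madd_zero] at h

section Complement

variable {e ec : A}

theorem one_mem_madd_complement (hec : ec ∈ madd 1 (-e)) : (1 : A) ∈ madd e ec := by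
  simpa only [neg_neg_eq, madd_comm] using madd_rev_right ec 1 (-e) hec

theorem complement_mul_self (hec : ec ∈ madd 1 (-e)) (horth : e * ec = 0) : ec * ec = ec := by
  have h := madd_mul ec 1 (-e) ec hec
  rwa [one_mul, neg_mul_eq, horth, neg_zero_eq, mem_madd_zero] at h

theorem mul_mem_madd_of_mem_madd_complement (he : e * e = e) (hec : ec ∈ madd 1 (-e))
    (horth : e * ec = 0) {z v w : A} (hz : z ∈ madd (e * v) (ec * w)) :
    v * w ∈ madd (e * w * z) (ec * v * z) := by
  have hze : z * e = e * v := by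
    have hvanish : ec * w * e = 0 := by rw [mul_right_comm, mul_comm ec, horth, zero_mul']
    rw [mul_eq_of_mem_madd_of_mul_eq_zero hz hvanish, mul_right_comm, he]
  have hzec : z * ec = ec * w := by
    rw [madd_comm] at hz
    rw [mul_eq_of_mem_madd_of_mul_eq_zero hz (by rw [mul_right_comm, horth, zero_mul']),
      mul_right_comm, complement_mul_self hec horth]
  have h := madd_mul 1 e ec (v * w) (one_mem_madd_complement hec)
  have he' : e * w * z = e * (v * w) := calc
    e * w * z = w * (z * e) := by ac_rfl
    _ = e * (v * w) := by rw [hze]; ac_rfl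
  have hec' : ec * v * z = ec * (v * w) := calc
    ec * v * z = v * (z * ec) := by ac_rfl
    _ = ec * (v * w) := by rw [hzec]; ac_rfl
  rwa [one_mul, ← he', ← hec'] at h

end Complement

namespace IsPreorderSet

variable {T : Set A}

theorem zero_mem (hT : IsPreorderSet T) : (0 : A) ∈ T := by
  simpa only [mul_zero'] using hT.1 0

theorem mem_of_mul_self_eq (hT : IsPreorderSet T) {e : A} (he : e * e = e) : e ∈ T :=
  he ▸ hT.1 e

theorem madd_oneAdd_subset (hT : IsPreorderSet T) {s t : A} (hs : s ∈ oneAdd T) (ht : t ∈ T) :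
    madd s t ⊆ oneAdd T := by
  obtain ⟨q, hq, hs⟩ := hs
  intro y hy
  obtain ⟨h, hh, hy⟩ := madd_assoc 1 q t s y hs hy
  exact ⟨h, hT.2.2 q hq t ht hh, hy⟩

theorem mul_oneAdd_mem (hT : IsPreorderSet T) {t s : A} (ht : t ∈ T) (hs : s ∈ oneAdd T) :
    t * s ∈ T := by
  obtain ⟨q, hq, hs⟩ := hs
  have h := madd_mul s 1 q t hs
  rw [one_mul] at h
  rw [mul_comm]
  exact hT.2.2 t ht (q * t) (hT.2.1 q hq t ht) h

theorem isMultiplicative_oneAdd (hT : IsPreorderSet T) : IsMultiplicative (oneAdd T) := by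
  refine ⟨⟨0, hT.zero_mem, (mem_madd_zero 1 1).mpr rfl⟩, ?_⟩
  rintro s ⟨t, ht, hs⟩ s' hs'
  have h := madd_mul s 1 t s' hs
  rw [one_mul] at h
  exact hT.madd_oneAdd_subset hs' (hT.mul_oneAdd_mem ht hs') h

theorem exists_mul_mem_oneAdd_of_mul_mem (hT : IsPreorderSet T) {z p : A} (hz : z ∈ T)
    (hp : p ∈ T) (hpz : p * z ∈ oneAdd T) : ∃ s ∈ oneAdd T, z * s ∈ oneAdd T := by
  obtain ⟨s, hs⟩ := madd_nonempty (1 : A) p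
  refine ⟨s, ⟨p, hp, hs⟩, ?_⟩
  have h := madd_mul s 1 p z hs
  rw [one_mul, madd_comm, mul_comm s] at h
  exact hT.madd_oneAdd_subset hpz hz h

theorem isVNSubgroup_oneAdd (hT : IsPreorderSet T) (hA : IsHyperring A) :
    IsVNSubgroup (oneAdd T) := by
  have hS := hT.isMultiplicative_oneAdd
  refine ⟨hS, ?_⟩
  rintro e x ec he hec horth ⟨u, hu, v, hv, w, hw, hxu⟩
  have heT := hT.mem_of_mul_self_eq he
  have hecT := hT.mem_of_mul_self_eq (complement_mul_self hec horth)
  have hzT : x * u ∈ T :=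
    hT.2.2 _ (hT.mul_oneAdd_mem heT hv) _ (hT.mul_oneAdd_mem hecT hw) hxu
  obtain ⟨p, hp, hvw⟩ := hA _ _ _ _ (mul_mem_madd_of_mem_madd_complement he hec horth hxu)
  have hpT : p ∈ T := hT.2.2 _ (hT.mul_oneAdd_mem heT hw) _ (hT.mul_oneAdd_mem hecT hv) hp
  obtain ⟨s, hs, hzs⟩ :=
    hT.exists_mul_mem_oneAdd_of_mul_mem hzT hpT (hvw ▸ hS.2 v hv w hw)
  exact ⟨u * s, hS.2 u hu s hs, by rwa [← mul_assoc]⟩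

end IsPreorderSet

end Multiring

theorem oneAdd_preorder_isVNSubgroup_general {A : Type u} [Multiring A]
    (hA : Multiring.IsVonNeumann A) (T : Set A)
    (hT : Multiring.IsPreorderSet T) :
    Multiring.IsVNSubgroup (Multiring.oneAdd T) :=
  hT.isVNSubgroup_oneAdd hA.1

/-- If `A` is a von Neumann hyperring and `T` a proper preorder, then `1 + T`
is a von Neumann subgroup of `A`. -/
theorem oneAdd_preorder_isVNSubgroup {A : Type u} [Multiring A]
    (hA : Multiring.IsVonNeumann A) (T : Set A)
    (hT : Multiring.IsPreorderSet T) (hproper : (-(1 : A)) ∉ T) :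
    Multiring.IsVNSubgroup (Multiring.oneAdd T) :=
  oneAdd_preorder_isVNSubgroup_general hA T hT
end
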